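/- As u → ∞, the truncated-normal exceedance mean μ₁(u) = u² + 1 - u·φ(u)/(1-Φ(u)) satisfies μ₁(u) ~ 2/(u² - 1), i.e., μ₁(u)·(u²-1)/2 → 1. -/

import Mathlib

open MeasureTheory Real

/-- Standard normal density. -/
noncomputable def phi (x : ℝ) : ℝ := (Real.sqrt (2 * π))⁻¹ * Real.exp (-x ^ 2 / 2)

/-- Standard normal CDF. -/
noncomputable def Phi (x : ℝ) : ℝ := ∫ t in Set.Iic x, phi t

/-!
Write `R(u) = (1 - Φ(u)) / φ(u)` for the Mills ratio. Since `φ' = -x φ`, every `g` with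
`g' = x g - q` and `g → 0` satisfies `∫_u^∞ φ q = φ(u) g(u)`. For the truncations
`g = u⁻¹ - u⁻³ + 3u⁻⁵ - a u⁻⁷` of the asymptotic series of `R` one gets
`q = 1 + (15 - a) u⁻⁶ - 7a u⁻⁸`, so comparing with `1 - Φ(u) = ∫_u^∞ φ` gives `g ≤ R` for
`a = 15` (where `q ≤ 1`) and `R ≤ g` for `a = 0` (where `q ≥ 1`). The quantity of the theorem
is increasing in `R`, and at both truncations it is a rational function of `u⁻¹` equal to `1`
at `u⁻¹ = 0`.
-/

open Filter Set Topology ProbabilityTheory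

lemma phi_eq_gaussianPDFReal : phi = gaussianPDFReal 0 1 := by
  ext x; simp [phi, gaussianPDFReal]

lemma phi_pos (x : ℝ) : 0 < phi x := by unfold phi; positivity

lemma integrable_phi : Integrable phi :=
  phi_eq_gaussianPDFReal ▸ integrable_gaussianPDFReal 0 1

lemma one_sub_Phi_eq_integral_Ioi (u : ℝ) : 1 - Phi u = ∫ t in Ioi u, phi t := by
  have h := intervalIntegral.integral_Iic_add_Ioi (b := u) (μ := volume)
    integrable_phi.integrableOn integrable_phi.integrableOn
  rw [phi_eq_gaussianPDFReal, integral_gaussianPDFReal_eq_one 0 one_ne_zero] at h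
  rw [Phi, ← h, phi_eq_gaussianPDFReal, add_sub_cancel_left]

lemma hasDerivAt_phi (x : ℝ) : HasDerivAt phi (-x * phi x) x := by
  have h : HasDerivAt (fun t : ℝ => -t ^ 2 / 2) (-x) x :=
    ((hasDerivAt_pow 2 x).neg.div_const 2).congr_deriv (by push_cast; ring)
  exact (h.exp.const_mul (√(2 * π))⁻¹).congr_deriv (by rw [phi]; ring)

lemma tendsto_phi_atTop : Tendsto phi atTop (𝓝 0) := by
  have h : Tendsto (fun x : ℝ => -x ^ 2 / 2) atTop atBot :=
    (tendsto_neg_atTop_atBot.comp (tendsto_pow_atTop two_ne_zero)).atBot_div_const two_pos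
  unfold phi
  simpa using (tendsto_exp_atBot.comp h).const_mul (√(2 * π))⁻¹

lemma hasDerivAt_neg_phi_mul {g : ℝ → ℝ} {g' x : ℝ} (hg : HasDerivAt g g' x) :
    HasDerivAt (fun t => -(phi t * g t)) (phi x * (x * g x - g')) x :=
  ((hasDerivAt_phi x).mul hg).neg.congr_deriv (by ring)

lemma integrableOn_Ioi_phi_mul {g q : ℝ → ℝ} {u : ℝ}
    (hg : ∀ x ∈ Ici u, HasDerivAt g (x * g x - q x) x) (hg_lim : Tendsto g atTop (𝓝 0))
    (hq : ∀ x ∈ Ioi u, 0 ≤ q x) :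
    IntegrableOn (fun t => phi t * q t) (Ioi u) :=
  integrableOn_Ioi_deriv_of_nonneg' (g := fun t => -(phi t * g t))
    (fun x hx => (hasDerivAt_neg_phi_mul (hg x hx)).congr_deriv (by ring))
    (fun x hx => mul_nonneg (phi_pos x).le (hq x hx))
    (by simpa using (tendsto_phi_atTop.mul hg_lim).neg)

lemma integral_Ioi_phi_mul {g q : ℝ → ℝ} {u : ℝ}
    (hg : ∀ x ∈ Ici u, HasDerivAt g (x * g x - q x) x) (hg_lim : Tendsto g atTop (𝓝 0))
    (hq : ∀ x ∈ Ioi u, 0 ≤ q x) :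
    ∫ t in Ioi u, phi t * q t = phi u * g u := by
  rw [integral_Ioi_of_hasDerivAt_of_nonneg' (g := fun t => -(phi t * g t))
    (fun x hx => (hasDerivAt_neg_phi_mul (hg x hx)).congr_deriv (by ring))
    (fun x hx => mul_nonneg (phi_pos x).le (hq x hx))
    (by simpa using (tendsto_phi_atTop.mul hg_lim).neg)]
  ring

noncomputable def millsRatio (u : ℝ) : ℝ := (1 - Phi u) / phi u

lemma div_millsRatio (u : ℝ) : u / millsRatio u = u * phi u / (1 - Phi u) :=
  div_div_eq_mul_div u _ _

noncomputable def millsApprox (a u : ℝ) : ℝ :=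
  u⁻¹ - u⁻¹ ^ 3 + 3 * u⁻¹ ^ 5 - a * u⁻¹ ^ 7

lemma hasDerivAt_millsApprox (a : ℝ) {x : ℝ} (hx : x ≠ 0) :
    HasDerivAt (millsApprox a)
      (x * millsApprox a x - (1 + (15 - a) * x⁻¹ ^ 6 - 7 * a * x⁻¹ ^ 8)) x := by
  have h := hasDerivAt_inv hx
  refine (((h.sub (h.pow 3)).add ((h.pow 5).const_mul 3)).sub
    ((h.pow 7).const_mul a)).congr_deriv ?_
  simp only [millsApprox, inv_pow]
  field_simp
  ring

lemma tendsto_millsApprox_atTop (a : ℝ) : Tendsto (millsApprox a) atTop (𝓝 0) := by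
  have h : Continuous fun s : ℝ => s - s ^ 3 + 3 * s ^ 5 - a * s ^ 7 := by fun_prop
  exact (h.tendsto' 0 0 (by simp)).comp tendsto_inv_atTop_zero

lemma inv_le_half_of_two_le {x : ℝ} (hx : 2 ≤ x) : x⁻¹ ≤ 1 / 2 := by
  rw [one_div]; exact inv_anti₀ two_pos hx

lemma millsApprox_fifteen_pos {u : ℝ} (hu : 2 ≤ u) : 0 < millsApprox 15 u := by
  have hs : 0 < u⁻¹ := by positivity
  have hs2 := inv_le_half_of_two_le hu
  rw [millsApprox]
  generalize u⁻¹ = s at hs hs2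
  have h2 : s ^ 2 ≤ 1 / 4 := by nlinarith
  have h6 : s ^ 6 ≤ 1 / 64 := by nlinarith [pow_le_pow_left₀ hs.le hs2 6]
  have hD : 0 < 1 - s ^ 2 + 3 * s ^ 4 - 15 * s ^ 6 := by nlinarith [pow_nonneg hs.le 4]
  nlinarith

lemma millsApprox_fifteen_le_millsRatio {u : ℝ} (hu : 2 ≤ u) :
    millsApprox 15 u ≤ millsRatio u := by
  have hu0 : 0 < u := by linarith
  have hq : ∀ x ∈ Ioi u, 0 ≤ 1 + (15 - 15) * x⁻¹ ^ 6 - 7 * 15 * x⁻¹ ^ 8 := by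
    intro x hx
    have := pow_le_pow_left₀ (inv_pos.2 (hu0.trans hx)).le
      (inv_le_half_of_two_le (hu.trans hx.le)) 8
    norm_num at this ⊢
    linarith
  rw [millsRatio, le_div_iff₀ (phi_pos u), mul_comm, one_sub_Phi_eq_integral_Ioi,
    ← integral_Ioi_phi_mul (fun x hx => hasDerivAt_millsApprox 15 (lt_of_lt_of_le hu0 hx).ne')
      (tendsto_millsApprox_atTop 15) hq]
  refine integral_mono_of_nonneg ?_ integrable_phi.integrableOn ?_
  · filter_upwards [ae_restrict_mem measurableSet_Ioi] with x hx
    exact mul_nonneg (phi_pos x).le (hq x hx)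
  · filter_upwards [ae_restrict_mem measurableSet_Ioi] with x hx
    have : 0 ≤ x⁻¹ ^ 8 := by positivity
    nlinarith [phi_pos x]

lemma millsRatio_le_millsApprox_zero {u : ℝ} (hu : 0 < u) :
    millsRatio u ≤ millsApprox 0 u := by
  have hq : ∀ x ∈ Ioi u, 0 ≤ 1 + (15 - 0) * x⁻¹ ^ 6 - 7 * 0 * x⁻¹ ^ 8 := fun x _ => by
    norm_num; positivity
  have hg : ∀ x ∈ Ici u, HasDerivAt (millsApprox 0) _ x :=
    fun x hx => hasDerivAt_millsApprox 0 (lt_of_lt_of_le hu hx).ne'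
  rw [millsRatio, div_le_iff₀ (phi_pos u), mul_comm, one_sub_Phi_eq_integral_Ioi,
    ← integral_Ioi_phi_mul hg (tendsto_millsApprox_atTop 0) hq]
  refine setIntegral_mono_on integrable_phi.integrableOn
    (integrableOn_Ioi_phi_mul hg (tendsto_millsApprox_atTop 0) hq) measurableSet_Ioi
    fun x hx => ?_
  have : 0 ≤ x⁻¹ ^ 6 := by positivity
  nlinarith [phi_pos x]

lemma tendsto_millsBound_atTop (a : ℝ) :
    Tendsto (fun u => (u ^ 2 + 1 - u / millsApprox a u) * (u ^ 2 - 1) / 2) atTop (𝓝 1) := by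
  set D : ℝ → ℝ := fun s => 1 - s ^ 2 + 3 * s ^ 4 - a * s ^ 6
  have hD : Tendsto (fun u : ℝ => D u⁻¹) atTop (𝓝 1) := by
    have : Tendsto D (𝓝 0) (𝓝 1) := by
      simpa [D] using (by fun_prop : Continuous D).tendsto 0
    exact this.comp tendsto_inv_atTop_zero
  -- the bound as a function of `s = u⁻¹`
  have hF : Tendsto (fun s => (2 + (3 - a) * s ^ 2 - a * s ^ 4) * (1 - s ^ 2) / (2 * D s))
      (𝓝 0) (𝓝 1) := by
    have : ContinuousAt
        (fun s => (2 + (3 - a) * s ^ 2 - a * s ^ 4) * (1 - s ^ 2) / (2 * D s)) 0 :=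
      ContinuousAt.div (by fun_prop) (by fun_prop) (by simp [D])
    simpa [D] using this.tendsto
  refine (hF.comp tendsto_inv_atTop_zero).congr' ?_
  filter_upwards [hD.eventually_ne one_ne_zero, eventually_gt_atTop 0] with u hDu hu
  have hmills : millsApprox a u = u⁻¹ * D u⁻¹ := by simp only [millsApprox, D]; ring
  rw [Function.comp_apply, hmills]
  have hs : u⁻¹ ≠ 0 := inv_ne_zero hu.ne'
  obtain ⟨s, rfl⟩ : ∃ s, u = s⁻¹ := ⟨u⁻¹, (inv_inv u).symm⟩
  rw [inv_inv] at hs hDu ⊢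
  generalize hd : D s = d at hDu ⊢
  field_simp
  subst hd
  ring

/-- As u → ∞, μ₁(u) = u² + 1 - u φ(u)/(1-Φ(u)) satisfies μ₁(u) ~ 2/(u²-1). -/
theorem stmt18 :
    Filter.Tendsto
      (fun u : ℝ => (u ^ 2 + 1 - u * phi u / (1 - Phi u)) * (u ^ 2 - 1) / 2)
      Filter.atTop (nhds 1) := by
  have mono : ∀ {u r r' : ℝ}, 2 ≤ u → 0 < r → r ≤ r' →
      (u ^ 2 + 1 - u / r) * (u ^ 2 - 1) / 2 ≤ (u ^ 2 + 1 - u / r') * (u ^ 2 - 1) / 2 := by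
    intro u r r' hu hr hrr'
    have : 0 ≤ u ^ 2 - 1 := by nlinarith
    gcongr
  refine tendsto_of_tendsto_of_tendsto_of_le_of_le' (tendsto_millsBound_atTop 15)
    (tendsto_millsBound_atTop 0) ?_ ?_ <;>
    filter_upwards [eventually_ge_atTop 2] with u hu <;>
    rw [← div_millsRatio]
  · exact mono hu (millsApprox_fifteen_pos hu) (millsApprox_fifteen_le_millsRatio hu)
  · exact mono hu ((millsApprox_fifteen_pos hu).trans_le (millsApprox_fifteen_le_millsRatio hu))
      (millsRatio_le_millsApprox_zero (by linarith))
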